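/- Assume in addition that inf_Θ g > 0 (so that log g is bounded). Let t ∈ ℝ and let μ be an ergodic T-invariant probability measure on (Θ, 𝓑). Then μ(S_t \ S_t') = 0 and μ(R_t' \ S_t) = 0. -/

import Mathlib

open MeasureTheory Filter Topology

/-- The general setting of the paper: a measurable base system with invertible
driving map `T`, a concave fibre function `h` (with its derivative `h'` on `[0,∞)`)
and a bounded measurable positive function `g`. -/
structure Setting (Θ : Type*) [MeasurableSpace Θ] where
  T : Θ → Θ
  Tinv : Θ → Θ
  left_inv : Function.LeftInverse Tinv T
  right_inv : Function.RightInverse Tinv T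
  T_meas : Measurable T
  Tinv_meas : Measurable Tinv
  h : ℝ → ℝ
  h' : ℝ → ℝ
  h_hasDeriv : ∀ x ∈ Set.Ici (0 : ℝ), HasDerivWithinAt h (h' x) (Set.Ici 0) x
  h'_cont : ContinuousOn h' (Set.Ici 0)
  h_strictConcave : StrictConcaveOn ℝ (Set.Ici 0) h
  h_zero : h 0 = 0
  h'_pos : ∀ x : ℝ, 0 < x → 0 < h' x
  h'_zero : h' 0 = 1
  h_sublinear : Tendsto (fun x => h x / x) atTop (𝓝 0)
  g : Θ → ℝ
  g_pos : ∀ θ, 0 < g θ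
  g_bdd : ∃ C : ℝ, ∀ θ, g θ ≤ C
  g_meas : Measurable g

namespace Setting

variable {Θ : Type*} [MeasurableSpace Θ]

/-- The fibre maps `f_t(θ,x) = e^{-t} g(θ) h(x)`. -/
noncomputable def f (S : Setting Θ) (t : ℝ) (θ : Θ) (x : ℝ) : ℝ :=
  Real.exp (-t) * S.g θ * S.h x

/-- The iterated fibre maps: `fn t 0 θ x = x` and
`fn t (n+1) θ x = f t (T^[n] θ) (fn t n θ x)`, so that `fn t 1 = f t`. -/
noncomputable def fn (S : Setting Θ) (t : ℝ) : ℕ → Θ → ℝ → ℝ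
  | 0, _, x => x
  | n + 1, θ, x => S.f t (S.T^[n] θ) (S.fn t n θ x)

/-- `ψ_{t,n}(θ) = f_t^n(T^{-n}θ, M)`. -/
noncomputable def ψ (S : Setting Θ) (t M : ℝ) (n : ℕ) (θ : Θ) : ℝ :=
  S.fn t n (S.Tinv^[n] θ) M

/-- The maximal invariant function `φ_t(θ) = inf_{n ≥ 1} ψ_{t,n}(θ)`. -/
noncomputable def φ (S : Setting Θ) (t M : ℝ) (θ : Θ) : ℝ :=
  ⨅ n : ℕ, S.ψ t M (n + 1) θ

/-- The zero set `N_t = {θ : φ_t(θ) = 0}`. -/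
noncomputable def Nset (S : Setting Θ) (t M : ℝ) : Set Θ := {θ | S.φ t M θ = 0}

/-- The critical parameter `t_c(θ) = inf {t : φ_t(θ) = 0}`. -/
noncomputable def tc (S : Setting Θ) (M : ℝ → ℝ) (θ : Θ) : ℝ :=
  sInf {t : ℝ | S.φ t (M t) θ = 0}

/-- The bifurcation set `S_t = {θ : t_c(θ) = t}`. -/
noncomputable def Sset (S : Setting Θ) (M : ℝ → ℝ) (t : ℝ) : Set Θ :=
  {θ | S.tc M θ = t}

/-- The Birkhoff average `Γ^{(n)}(θ) = (1/n) ∑_{k=1}^n log g(T^{-k}θ)`. -/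
noncomputable def Γn (S : Setting Θ) (n : ℕ) (θ : Θ) : ℝ :=
  (∑ k ∈ Finset.range n, Real.log (S.g (S.Tinv^[k + 1] θ))) / n

/-- The lower backwards Lyapunov average `Γ(θ) = liminf_n Γ^{(n)}(θ)`. -/
noncomputable def Γ (S : Setting Θ) (θ : Θ) : ℝ :=
  Filter.liminf (fun n : ℕ => S.Γn n θ) Filter.atTop

/-- The averaged exponent `γ(μ) = ∫ log g dμ`. -/
noncomputable def γfn (S : Setting Θ) (μ : Measure Θ) : ℝ :=
  ∫ θ, Real.log (S.g θ) ∂μ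

/-- The function `H(x) = log (h(x)/x)`. -/
noncomputable def Hfn (S : Setting Θ) (x : ℝ) : ℝ := Real.log (S.h x / x)

end Setting

/-- The set `S_t' = {θ : lim_n Γ^{(n)}(θ) = t}`. -/
def Setting.S't {Θ : Type*} [MeasurableSpace Θ] (S : Setting Θ) (t : ℝ) : Set Θ :=
  {θ | Tendsto (fun n : ℕ => S.Γn n θ) atTop (𝓝 t)}

/-- The set `R_t' = {θ : Γ^{(n_k)}(θ) → t along some strictly increasing sequence (n_k)}`. -/
def Setting.R't {Θ : Type*} [MeasurableSpace Θ] (S : Setting Θ) (t : ℝ) : Set Θ :=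
  {θ | ∃ nk : ℕ → ℕ, StrictMono nk ∧ (∀ k, 0 < nk k) ∧
    Tendsto (fun k : ℕ => S.Γn (nk k) θ) atTop (𝓝 t)}

/-!
Since `inf g > 0`, `log g` is bounded, so by Birkhoff's ergodic theorem (which follows from the
maximal ergodic inequality) `Γ^{(n)}(θ)` converges to a constant `γ` for μ-a.e. `θ`.
For every such `θ`, `t_c(θ) = γ`. Indeed `h(x) ≤ x` gives `ψ_{t,n} ≤ M exp (n (Γ^{(n)} - t))`,
so `φ_t = 0` for `t > γ`. Conversely `h(x) ≥ e^{-ε} min(x, δ)` for some `δ > 0`, so along the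
backward orbit `ψ_{t,n}` stays above `min(δ, M) exp (j Γ^{(j)} - j (t + ε))` for some `j ≤ n`;
for `t + ε < γ` these exponents are bounded below, hence `φ_t > 0`. Thus a.e. on `S_t` we have
`γ = t`, i.e. `Γ^{(n)} → t`, and a.e. on `R_t'` a subsequence converges to `t`, so again `γ = t`.
-/

lemma Filter.liminf_eq_of_tendsto_sub {ι : Type*} {l : Filter ι} [l.NeBot] {u v : ι → ℝ}
    (h : Tendsto (u - v) l (𝓝 0)) (hv : IsBoundedUnder (· ≤ ·) l v)
    (hv' : IsBoundedUnder (· ≥ ·) l v) :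
    liminf u l = liminf v l := by
  have hu : u = (u - v) + v := by simp
  rw [hu]
  apply le_antisymm
  · calc liminf ((u - v) + v) l ≤ limsup (u - v) l + liminf v l :=
          liminf_add_le h.isBoundedUnder_ge h.isBoundedUnder_le hv' hv.isCoboundedUnder_ge
      _ = liminf v l := by rw [h.limsup_eq, zero_add]
  · calc liminf v l = liminf (u - v) l + liminf v l := by rw [h.liminf_eq, zero_add]
      _ ≤ liminf ((u - v) + v) l :=
          le_liminf_add h.isBoundedUnder_ge h.isBoundedUnder_le hv' hv.isCoboundedUnder_ge

section MaximalErgodic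

variable {α : Type*} {σ : α → α} {f : α → ℝ}

noncomputable def maxBirkhoffSum (σ : α → α) (f : α → ℝ) (N : ℕ) (x : α) : ℝ :=
  (Finset.range (N + 1)).sup' Finset.nonempty_range_add_one fun n => birkhoffSum σ f n x

lemma birkhoffSum_le_maxBirkhoffSum {n N : ℕ} (hn : n ≤ N) (x : α) :
    birkhoffSum σ f n x ≤ maxBirkhoffSum σ f N x :=
  Finset.le_sup' (fun n => birkhoffSum σ f n x) (Finset.mem_range_succ_iff.2 hn)

lemma maxBirkhoffSum_nonneg (N : ℕ) (x : α) : 0 ≤ maxBirkhoffSum σ f N x := by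
  simpa using birkhoffSum_le_maxBirkhoffSum (σ := σ) (f := f) N.zero_le x

lemma maxBirkhoffSum_mono (x : α) : Monotone fun N => maxBirkhoffSum σ f N x :=
  fun _ _ hNN' => Finset.sup'_mono _ (Finset.range_subset_range.2 (Nat.succ_le_succ hNN')) _

lemma exists_birkhoffSum_pos_iff (x : α) :
    (∃ n, 0 < birkhoffSum σ f n x) ↔ ∃ N, 0 < maxBirkhoffSum σ f N x := by
  constructor
  · rintro ⟨n, hn⟩
    exact ⟨n, hn.trans_le (birkhoffSum_le_maxBirkhoffSum le_rfl x)⟩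
  · rintro ⟨N, hN⟩
    obtain ⟨n, -, hn⟩ := Finset.exists_mem_eq_sup' Finset.nonempty_range_add_one
      (fun n => birkhoffSum σ f n x)
    exact ⟨n, hn ▸ hN⟩

lemma maxBirkhoffSum_le_add {N : ℕ} {x : α} (hx : 0 < maxBirkhoffSum σ f N x) :
    maxBirkhoffSum σ f N x ≤ f x + maxBirkhoffSum σ f N (σ x) := by
  obtain ⟨n, hn, hmax⟩ := Finset.exists_mem_eq_sup' Finset.nonempty_range_add_one
    (fun n => birkhoffSum σ f n x)
  rw [maxBirkhoffSum, hmax] at hx ⊢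
  cases n with
  | zero => simp at hx
  | succ m =>
    rw [birkhoffSum_succ']
    have hm : m ≤ N := Nat.lt_succ_iff.1 (Finset.mem_range.1 hn) |>.trans' m.le_succ
    gcongr
    exact birkhoffSum_le_maxBirkhoffSum hm (σ x)

lemma maxBirkhoffSum_eq_sup' (N : ℕ) :
    maxBirkhoffSum σ f N = (Finset.range (N + 1)).sup' Finset.nonempty_range_add_one
      (birkhoffSum σ f) := by
  ext x
  simp only [maxBirkhoffSum, Finset.sup'_apply]

variable [MeasurableSpace α] {μ : Measure α}

lemma Measurable.birkhoffSum (hσ : Measurable σ) (hf : Measurable f) (n : ℕ) :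
    Measurable (birkhoffSum σ f n) :=
  Finset.measurable_sum _ fun k _ => hf.comp (hσ.iterate k)

lemma Measurable.maxBirkhoffSum (hσ : Measurable σ) (hf : Measurable f) (N : ℕ) :
    Measurable (maxBirkhoffSum σ f N) := by
  rw [maxBirkhoffSum_eq_sup']
  exact Finset.measurable_sup' _ fun n _ => hσ.birkhoffSum hf n

lemma MeasureTheory.MeasurePreserving.integrable_birkhoffSum (hσ : MeasurePreserving σ μ μ)
    (hf : Integrable f μ) (n : ℕ) : Integrable (birkhoffSum σ f n) μ :=
  integrable_finsetSum _ fun k _ => (hσ.iterate k).integrable_comp_of_integrable hf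

lemma MeasureTheory.MeasurePreserving.integrable_maxBirkhoffSum (hσ : MeasurePreserving σ μ μ)
    (hf : Integrable f μ) (N : ℕ) : Integrable (maxBirkhoffSum σ f N) μ := by
  rw [maxBirkhoffSum_eq_sup']
  exact Finset.sup'_induction (p := (Integrable · μ)) _ _ (fun _ h₁ _ h₂ => h₁.sup h₂)
    fun n _ => hσ.integrable_birkhoffSum hf n

/-- Hopf's maximal ergodic theorem. -/
theorem MeasureTheory.MeasurePreserving.setIntegral_maxBirkhoffSum_pos_nonneg
    (hσ : MeasurePreserving σ μ μ) (hfm : Measurable f) (hf : Integrable f μ) (N : ℕ) :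
    0 ≤ ∫ x in {x | 0 < maxBirkhoffSum σ f N x}, f x ∂μ := by
  set F := maxBirkhoffSum σ f N
  set A := {x | 0 < F x}
  have hFm : Measurable F := hσ.measurable.maxBirkhoffSum hfm N
  have hF : Integrable F μ := hσ.integrable_maxBirkhoffSum hf N
  have hFσ : Integrable (F ∘ σ) μ := hσ.integrable_comp_of_integrable hF
  calc (0 : ℝ) = ∫ x, F x ∂μ - ∫ x, F (σ x) ∂μ := by
        rw [← integral_map hσ.measurable.aemeasurable hFm.aestronglyMeasurable, hσ.map_eq,
          sub_self]
    _ ≤ ∫ x in A, F x ∂μ - ∫ x in A, F (σ x) ∂μ := by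
        rw [setIntegral_eq_integral_of_forall_compl_eq_zero (f := F) (s := A) fun x hx =>
          le_antisymm (not_lt.1 hx) (maxBirkhoffSum_nonneg N x)]
        exact sub_le_sub_left (setIntegral_le_integral hFσ
          (Eventually.of_forall fun x => maxBirkhoffSum_nonneg N (σ x))) _
    _ = ∫ x in A, (F x - F (σ x)) ∂μ := (integral_sub hF.integrableOn hFσ.integrableOn).symm
    _ ≤ ∫ x in A, f x ∂μ :=
        setIntegral_mono_on (hF.sub hFσ).integrableOn hf.integrableOn
          (measurableSet_lt measurable_const hFm) fun x hx => by
            linarith [maxBirkhoffSum_le_add hx]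

theorem MeasureTheory.MeasurePreserving.integral_nonneg_of_ae_exists_birkhoffSum_pos
    (hσ : MeasurePreserving σ μ μ) (hfm : Measurable f) (hf : Integrable f μ)
    (h : ∀ᵐ x ∂μ, ∃ n, 0 < birkhoffSum σ f n x) : 0 ≤ ∫ x, f x ∂μ := by
  set D : ℕ → Set α := fun N => {x | 0 < maxBirkhoffSum σ f N x}
  have hD : ∀ N, MeasurableSet (D N) := fun N =>
    measurableSet_lt measurable_const (hσ.measurable.maxBirkhoffSum hfm N)
  have hDmono : Monotone D := fun _ _ hNN' _ hx =>
    hx.trans_le (maxBirkhoffSum_mono _ hNN')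
  have hDae : ∀ᵐ x ∂μ, x ∈ ⋃ N, D N := by
    filter_upwards [h] with x hx
    simpa [D, exists_birkhoffSum_pos_iff] using hx
  have hlim := tendsto_setIntegral_of_monotone hD hDmono hf.integrableOn
  rw [Measure.restrict_eq_self_of_ae_mem hDae] at hlim
  exact ge_of_tendsto hlim (Eventually.of_forall fun N =>
    hσ.setIntegral_maxBirkhoffSum_pos_nonneg hfm hf N)

end MaximalErgodic

section PointwiseErgodic

variable {α : Type*} {σ : α → α} {f : α → ℝ} {K : ℝ}

lemma abs_birkhoffAverage_le (hK : ∀ x, |f x| ≤ K) (n : ℕ) (x : α) :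
    |birkhoffAverage ℝ σ f n x| ≤ K := by
  rcases n.eq_zero_or_pos with rfl | hn
  · simpa using (abs_nonneg _).trans (hK x)
  rw [birkhoffAverage, smul_eq_mul, abs_mul, abs_inv, Nat.abs_cast,
    inv_mul_le_iff₀ (by positivity)]
  calc |birkhoffSum σ f n x| ≤ ∑ k ∈ Finset.range n, |f (σ^[k] x)| :=
        Finset.abs_sum_le_sum_abs _ _
    _ ≤ n * K := (Finset.sum_le_sum fun k _ => hK (σ^[k] x)).trans_eq (by simp)

lemma isBoundedUnder_le_birkhoffAverage (hK : ∀ x, |f x| ≤ K) (x : α) :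
    IsBoundedUnder (· ≤ ·) atTop fun n => birkhoffAverage ℝ σ f n x :=
  isBoundedUnder_of ⟨K, fun n => (abs_le.1 (abs_birkhoffAverage_le hK n x)).2⟩

lemma isBoundedUnder_ge_birkhoffAverage (hK : ∀ x, |f x| ≤ K) (x : α) :
    IsBoundedUnder (· ≥ ·) atTop fun n => birkhoffAverage ℝ σ f n x :=
  isBoundedUnder_of ⟨-K, fun n => (abs_le.1 (abs_birkhoffAverage_le hK n x)).1⟩

lemma liminf_birkhoffAverage_apply (hK : ∀ x, |f x| ≤ K) (x : α) :
    liminf (fun n => birkhoffAverage ℝ σ f n (σ x)) atTop =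
      liminf (fun n => birkhoffAverage ℝ σ f n x) atTop :=
  liminf_eq_of_tendsto_sub
    (tendsto_birkhoffAverage_apply_sub_birkhoffAverage' ℝ
      (isBounded_iff_forall_norm_le.2 ⟨K, by rintro _ ⟨y, rfl⟩; exact hK y⟩) σ x)
    (isBoundedUnder_le_birkhoffAverage hK x) (isBoundedUnder_ge_birkhoffAverage hK x)

lemma birkhoffSum_const_sub (c : ℝ) (n : ℕ) (x : α) :
    birkhoffSum σ (fun y => c - f y) n x = n * c - birkhoffSum σ f n x := by
  simp [birkhoffSum, Finset.sum_sub_distrib]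

lemma Measurable.birkhoffAverage [MeasurableSpace α] (hσ : Measurable σ) (hf : Measurable f)
    (n : ℕ) : Measurable (birkhoffAverage ℝ σ f n) :=
  (hσ.birkhoffSum hf n).const_smul ((n : ℝ)⁻¹)

variable [MeasurableSpace α] {μ : Measure α} [IsProbabilityMeasure μ]

theorem Ergodic.ae_integral_le_liminf_birkhoffAverage (hσ : Ergodic σ μ) (hfm : Measurable f)
    (hK : ∀ x, |f x| ≤ K) :
    ∀ᵐ x ∂μ, ∫ y, f y ∂μ ≤ liminf (fun n => birkhoffAverage ℝ σ f n x) atTop := by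
  set L := fun x => liminf (fun n => birkhoffAverage ℝ σ f n x) atTop
  have hf : Integrable f μ :=
    (integrable_const K).mono' hfm.aestronglyMeasurable (ae_of_all _ hK)
  -- `{L < c}` is invariant, so null or conull; if conull, the maximal inequality for `c - f`
  -- gives `∫ f ≤ c`
  have key : ∀ c < ∫ y, f y ∂μ, ∀ᵐ x ∂μ, c ≤ L x := by
    intro c hc
    have hE : MeasurableSet {x | L x < c} :=
      measurableSet_lt (Measurable.liminf (hσ.measurable.birkhoffAverage hfm)) measurable_const
    have hinv : σ ⁻¹' {x | L x < c} = {x | L x < c} := by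
      ext x
      simp only [Set.mem_preimage, Set.mem_ofPred_eq, L, liminf_birkhoffAverage_apply hK x]
    rcases hσ.measure_self_or_compl_eq_zero hE hinv with h | h
    · simpa [ae_iff] using h
    · exfalso
      have hpos : ∀ᵐ x ∂μ, ∃ n, 0 < birkhoffSum σ (fun y => c - f y) n x := by
        have hae : ∀ᵐ x ∂μ, L x < c := by
          rw [ae_iff]; simpa only [not_lt, Set.compl_ofPred] using h
        filter_upwards [hae] with x hx
        obtain ⟨n, hn, hn0⟩ := ((frequently_lt_of_liminf_lt
          (isBoundedUnder_le_birkhoffAverage hK x).isCoboundedUnder_ge hx).and_eventually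
          (eventually_gt_atTop 0)).exists
        rw [birkhoffAverage, smul_eq_mul, inv_mul_lt_iff₀ (by positivity)] at hn
        exact ⟨n, by rw [birkhoffSum_const_sub]; linarith⟩
      have := hσ.toMeasurePreserving.integral_nonneg_of_ae_exists_birkhoffSum_pos
        (f := fun y => c - f y) (measurable_const.sub hfm) ((integrable_const c).sub hf) hpos
      rw [integral_sub (integrable_const c) hf, integral_const, probReal_univ, smul_eq_mul,
        one_mul] at this
      linarith
  have hall : ∀ᵐ x ∂μ, ∀ k : ℕ, ∫ y, f y ∂μ - 1 / (k + 1) ≤ L x :=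
    ae_all_iff.2 fun k => key _ (sub_lt_self _ Nat.one_div_pos_of_nat)
  filter_upwards [hall] with x hx
  have hlim : Tendsto (fun k : ℕ => ∫ y, f y ∂μ - 1 / ((k : ℝ) + 1)) atTop
      (𝓝 (∫ y, f y ∂μ)) := by
    simpa using tendsto_const_nhds.sub (tendsto_one_div_add_atTop_nhds_zero_nat (𝕜 := ℝ))
  exact le_of_tendsto' hlim hx

theorem Ergodic.ae_tendsto_birkhoffAverage (hσ : Ergodic σ μ) (hfm : Measurable f)
    (hK : ∀ x, |f x| ≤ K) :
    ∀ᵐ x ∂μ, Tendsto (fun n => birkhoffAverage ℝ σ f n x) atTop (𝓝 (∫ y, f y ∂μ)) := by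
  have hK' : ∀ x, |(-f) x| ≤ K := by simpa using hK
  filter_upwards [hσ.ae_integral_le_liminf_birkhoffAverage hfm hK,
    hσ.ae_integral_le_liminf_birkhoffAverage hfm.neg hK'] with x hlow hup
  refine tendsto_order.2 ⟨fun c hc => eventually_lt_of_lt_liminf (hc.trans_le hlow)
    (isBoundedUnder_ge_birkhoffAverage hK x), fun c hc => ?_⟩
  have hc' : -c < ∫ y, (-f) y ∂μ := by simpa [integral_neg] using hc
  filter_upwards [eventually_lt_of_lt_liminf (hc'.trans_le hup)
    (isBoundedUnder_ge_birkhoffAverage hK' x)] with n hn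
  simpa [birkhoffAverage_neg] using hn

end PointwiseErgodic

lemma tendsto_sub_mul_atTop_of_tendsto_div {a : ℕ → ℝ} {L s : ℝ}
    (ha : Tendsto (fun n => a n / n) atTop (𝓝 L)) (hs : s < L) :
    Tendsto (fun n => a n - s * n) atTop atTop := by
  refine (tendsto_natCast_atTop_atTop.atTop_mul_pos (sub_pos.2 hs) (ha.sub_const s)).congr' ?_
  filter_upwards [eventually_ne_atTop 0] with n hn
  rw [mul_sub, mul_div_cancel₀ _ (Nat.cast_ne_zero.2 hn), mul_comm]

lemma tendsto_sub_mul_atBot_of_tendsto_div {a : ℕ → ℝ} {L s : ℝ}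
    (ha : Tendsto (fun n => a n / n) atTop (𝓝 L)) (hs : L < s) :
    Tendsto (fun n => a n - s * n) atTop atBot := by
  have := tendsto_sub_mul_atTop_of_tendsto_div (a := -a) (s := -s)
    (by simpa only [Pi.neg_apply, neg_div] using ha.neg) (neg_lt_neg hs)
  rw [← tendsto_neg_atTop_iff]
  refine this.congr fun n => ?_
  simp only [Pi.neg_apply]
  ring

section ConcaveFibre

variable {h : ℝ → ℝ}

lemma le_self_of_concaveOn_Ici (hc : ConcaveOn ℝ (Set.Ici 0) h) (h0 : h 0 = 0)
    (hd : HasDerivWithinAt h 1 (Set.Ici 0) 0) {x : ℝ} (hx : 0 ≤ x) : h x ≤ x := by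
  rcases hx.eq_or_lt with rfl | hx
  · rw [h0]
  have := hc.slope_le_of_hasDerivWithinAt Set.self_mem_Ici hx.le hx hd
  rwa [slope_def_field, h0, sub_zero, sub_zero, div_le_one hx] at this

lemma exists_mul_min_le_of_concaveOn_Ici (hc : ConcaveOn ℝ (Set.Ici 0) h)
    (hm : MonotoneOn h (Set.Ici 0)) (h0 : h 0 = 0) (hd : HasDerivWithinAt h 1 (Set.Ici 0) 0)
    {c : ℝ} (hc1 : c < 1) : ∃ δ > 0, ∀ x, 0 ≤ x → c * min x δ ≤ h x := by
  have hslope : Tendsto (slope h 0) (𝓝[>] 0) (𝓝 1) :=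
    (hasDerivWithinAt_iff_tendsto_slope' (lt_irrefl 0)).1 (hd.mono Set.Ioi_subset_Ici_self)
  obtain ⟨δ, hδc, hδ⟩ := ((hslope.eventually (lt_mem_nhds hc1)).and self_mem_nhdsWithin).exists
  have hδ : 0 < δ := hδ
  refine ⟨δ, hδ, fun x hx => ?_⟩
  rcases le_total x δ with hxδ | hδx
  · rw [min_eq_left hxδ]
    rcases hx.eq_or_lt with rfl | hx
    · simp [h0]
    have hcx : c < slope h 0 x :=
      hδc.trans_le (hc.slope_anti Set.self_mem_Ici ⟨hx.le, hx.ne'⟩ ⟨hδ.le, hδ.ne'⟩ hxδ)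
    rw [slope_def_field, h0, sub_zero, sub_zero, lt_div_iff₀ hx] at hcx
    exact hcx.le
  · rw [min_eq_right hδx]
    rw [slope_def_field, h0, sub_zero, sub_zero, lt_div_iff₀ hδ] at hδc
    exact hδc.le.trans (hm hδ.le hx hδx)

end ConcaveFibre

namespace Setting

variable {Θ : Type*} [MeasurableSpace Θ] (S : Setting Θ)

lemma hasDerivWithinAt_h_zero : HasDerivWithinAt S.h 1 (Set.Ici 0) 0 :=
  S.h'_zero ▸ S.h_hasDeriv 0 Set.self_mem_Ici

lemma h_monotoneOn : MonotoneOn S.h (Set.Ici 0) := by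
  refine monotoneOn_of_hasDerivWithinAt_nonneg (convex_Ici 0)
    (fun x hx => (S.h_hasDeriv x hx).continuousWithinAt)
    (fun x hx => (S.h_hasDeriv x (interior_subset hx)).mono interior_subset) fun x hx => ?_
  rw [interior_Ici] at hx
  exact (S.h'_pos x hx).le

lemma h_le_self {x : ℝ} (hx : 0 ≤ x) : S.h x ≤ x :=
  le_self_of_concaveOn_Ici S.h_strictConcave.concaveOn S.h_zero S.hasDerivWithinAt_h_zero hx

lemma h_nonneg {x : ℝ} (hx : 0 ≤ x) : 0 ≤ S.h x :=
  S.h_zero ▸ S.h_monotoneOn Set.self_mem_Ici hx hx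

lemma exists_mul_min_le_h {c : ℝ} (hc : c < 1) : ∃ δ > 0, ∀ x, 0 ≤ x → c * min x δ ≤ S.h x :=
  exists_mul_min_le_of_concaveOn_Ici S.h_strictConcave.concaveOn S.h_monotoneOn S.h_zero
    S.hasDerivWithinAt_h_zero hc

lemma ψ_succ (t M : ℝ) (n : ℕ) (θ : Θ) :
    S.ψ t M (n + 1) θ = S.f t (S.Tinv θ) (S.ψ t M n (S.Tinv θ)) := by
  rw [ψ, fn, Function.iterate_succ_apply, S.right_inv.iterate n]
  rfl

lemma ψ_nonneg {t M : ℝ} (hM : 0 ≤ M) (n : ℕ) (θ : Θ) : 0 ≤ S.ψ t M n θ := by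
  induction n generalizing θ with
  | zero => exact hM
  | succ n ih =>
    rw [ψ_succ, f]
    have := S.g_pos (S.Tinv θ)
    have := S.h_nonneg (ih (S.Tinv θ))
    positivity

/-- `logSum n θ = ∑_{k=1}^n log g(T^{-k} θ)`, the numerator of `Γ^{(n)}(θ)`. -/
noncomputable def logSum (n : ℕ) (θ : Θ) : ℝ :=
  birkhoffSum S.Tinv (fun θ' => Real.log (S.g (S.Tinv θ'))) n θ

lemma logSum_zero (θ : Θ) : S.logSum 0 θ = 0 := birkhoffSum_zero _ _ _

lemma Γn_eq_logSum_div (n : ℕ) (θ : Θ) : S.Γn n θ = S.logSum n θ / n := by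
  simp only [Γn, logSum, birkhoffSum, Function.iterate_succ_apply']

lemma exp_logSum_succ (s : ℝ) (n : ℕ) (θ : Θ) :
    Real.exp (-s) * S.g (S.Tinv θ) * Real.exp (S.logSum n (S.Tinv θ) - s * n) =
      Real.exp (S.logSum (n + 1) θ - s * (n + 1 : ℕ)) := by
  have hsucc : S.logSum (n + 1) θ = Real.log (S.g (S.Tinv θ)) + S.logSum n (S.Tinv θ) :=
    birkhoffSum_succ' _ _ _ _
  rw [hsucc, Nat.cast_succ,
    show Real.log (S.g (S.Tinv θ)) + S.logSum n (S.Tinv θ) - s * (n + 1) =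
      -s + Real.log (S.g (S.Tinv θ)) + (S.logSum n (S.Tinv θ) - s * n) by ring,
    Real.exp_add, Real.exp_add, Real.exp_log (S.g_pos _)]

lemma ψ_le {t M : ℝ} (hM : 0 ≤ M) (n : ℕ) (θ : Θ) :
    S.ψ t M n θ ≤ M * Real.exp (S.logSum n θ - t * n) := by
  induction n generalizing θ with
  | zero => simp [ψ, fn, logSum_zero]
  | succ n ih =>
    have := S.g_pos (S.Tinv θ)
    calc S.ψ t M (n + 1) θ
        = Real.exp (-t) * S.g (S.Tinv θ) * S.h (S.ψ t M n (S.Tinv θ)) := by rw [ψ_succ, f]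
      _ ≤ Real.exp (-t) * S.g (S.Tinv θ) * S.ψ t M n (S.Tinv θ) := by
          gcongr; exact S.h_le_self (S.ψ_nonneg hM n _)
      _ ≤ Real.exp (-t) * S.g (S.Tinv θ) * (M * Real.exp (S.logSum n (S.Tinv θ) - t * n)) := by
          gcongr; exact ih _
      _ = M * Real.exp (S.logSum (n + 1) θ - t * (n + 1 : ℕ)) := by
          rw [← S.exp_logSum_succ]; ring

lemma exists_le_ψ {t M ε δ : ℝ} (hM : 0 ≤ M)
    (hδ : ∀ x, 0 ≤ x → Real.exp (-ε) * min x δ ≤ S.h x) (n : ℕ) (θ : Θ) :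
    ∃ j ≤ n, min δ M * Real.exp (S.logSum j θ - (t + ε) * j) ≤ S.ψ t M n θ := by
  induction n generalizing θ with
  | zero => exact ⟨0, le_rfl, by simp [ψ, fn, logSum_zero]⟩
  | succ n ih =>
    set y := S.ψ t M n (S.Tinv θ)
    have hg := S.g_pos (S.Tinv θ)
    have hstep : Real.exp (-(t + ε)) * S.g (S.Tinv θ) * min y δ ≤ S.ψ t M (n + 1) θ := by
      rw [ψ_succ, f]
      calc Real.exp (-(t + ε)) * S.g (S.Tinv θ) * min y δ
          = Real.exp (-t) * S.g (S.Tinv θ) * (Real.exp (-ε) * min y δ) := by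
            rw [neg_add, Real.exp_add]; ring
        _ ≤ Real.exp (-t) * S.g (S.Tinv θ) * S.h y := by
            gcongr; exact hδ y (S.ψ_nonneg hM n _)
    -- `j` counts the steps since the backward orbit was last at least `δ`
    rcases le_total δ y with hδy | hyδ
    · refine ⟨0 + 1, by omega, ?_⟩
      rw [← S.exp_logSum_succ, S.logSum_zero, Nat.cast_zero, mul_zero, sub_zero, Real.exp_zero,
        mul_one]
      rw [min_eq_right hδy] at hstep
      calc min δ M * (Real.exp (-(t + ε)) * S.g (S.Tinv θ))
          ≤ δ * (Real.exp (-(t + ε)) * S.g (S.Tinv θ)) := by gcongr; exact min_le_left _ _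
        _ = Real.exp (-(t + ε)) * S.g (S.Tinv θ) * δ := mul_comm _ _
        _ ≤ S.ψ t M (n + 1) θ := hstep
    · obtain ⟨j, hj, hjy⟩ := ih (S.Tinv θ)
      refine ⟨j + 1, by omega, ?_⟩
      rw [← S.exp_logSum_succ]
      rw [min_eq_left hyδ] at hstep
      calc min δ M * (Real.exp (-(t + ε)) * S.g (S.Tinv θ) *
            Real.exp (S.logSum j (S.Tinv θ) - (t + ε) * j))
          = Real.exp (-(t + ε)) * S.g (S.Tinv θ) *
            (min δ M * Real.exp (S.logSum j (S.Tinv θ) - (t + ε) * j)) := by ring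
        _ ≤ Real.exp (-(t + ε)) * S.g (S.Tinv θ) * y := by gcongr
        _ ≤ S.ψ t M (n + 1) θ := hstep

variable {S}

lemma φ_eq_zero_of_tendsto {θ : Θ} {ℓ t M : ℝ}
    (hconv : Tendsto (fun n => S.Γn n θ) atTop (𝓝 ℓ)) (hM : 0 ≤ M) (ht : ℓ < t) :
    S.φ t M θ = 0 := by
  simp only [Γn_eq_logSum_div] at hconv
  have hbdd : BddBelow (Set.range fun n => S.ψ t M (n + 1) θ) :=
    ⟨0, by rintro _ ⟨n, rfl⟩; exact S.ψ_nonneg hM _ _⟩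
  have hlim : Tendsto (fun n => M * Real.exp (S.logSum n θ - t * n)) atTop (𝓝 0) := by
    simpa using (Real.tendsto_exp_atBot.comp
      (tendsto_sub_mul_atBot_of_tendsto_div hconv ht)).const_mul M
  refine le_antisymm ?_ (Real.iInf_nonneg fun n => S.ψ_nonneg hM _ _)
  exact ge_of_tendsto (hlim.comp (tendsto_add_atTop_nat 1)) (Eventually.of_forall fun n =>
    (ciInf_le hbdd n).trans (S.ψ_le hM (n + 1) θ))

lemma φ_pos_of_tendsto {θ : Θ} {ℓ t M : ℝ}
    (hconv : Tendsto (fun n => S.Γn n θ) atTop (𝓝 ℓ)) (hM : 0 < M) (ht : t < ℓ) :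
    0 < S.φ t M θ := by
  simp only [Γn_eq_logSum_div] at hconv
  set ε := (ℓ - t) / 2
  have hε : 0 < ε := half_pos (sub_pos.2 ht)
  obtain ⟨δ, hδ, hδh⟩ := S.exists_mul_min_le_h (c := Real.exp (-ε))
    (Real.exp_lt_one_iff.2 (neg_neg_of_pos hε))
  obtain ⟨B, hB⟩ := bddBelow_range_of_tendsto_atTop_atTop
    (tendsto_sub_mul_atTop_of_tendsto_div hconv (by simp only [ε]; linarith : t + ε < ℓ))
  have hlow : ∀ n, min δ M * Real.exp B ≤ S.ψ t M n θ := fun n => by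
    obtain ⟨j, -, hj⟩ := S.exists_le_ψ hM.le hδh n θ
    exact le_trans (by gcongr; exact hB ⟨j, rfl⟩) hj
  exact (mul_pos (lt_min hδ hM) (Real.exp_pos B)).trans_le (le_ciInf fun n => hlow (n + 1))

lemma tc_eq_of_tendsto {M : ℝ → ℝ} (hM : ∀ t, 0 < M t) {θ : Θ} {ℓ : ℝ}
    (hconv : Tendsto (fun n => S.Γn n θ) atTop (𝓝 ℓ)) : S.tc M θ = ℓ := by
  have hglb : IsGLB {t | S.φ t (M t) θ = 0} ℓ :=
    isGLB_Ioi.of_subset_of_superset isGLB_Ici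
      (fun t ht => φ_eq_zero_of_tendsto hconv (hM t).le ht)
      fun t ht => not_lt.1 fun htℓ => (φ_pos_of_tendsto hconv (hM t) htℓ).ne' ht
  exact hglb.csInf_eq ⟨ℓ + 1, φ_eq_zero_of_tendsto hconv (hM _).le (lt_add_one ℓ)⟩

variable (S)

def toMeasurableEquiv : Θ ≃ᵐ Θ where
  toFun := S.T
  invFun := S.Tinv
  left_inv := S.left_inv
  right_inv := S.right_inv
  measurable_toFun := S.T_meas
  measurable_invFun := S.Tinv_meas

lemma ae_tendsto_Γn (hg : ∃ c : ℝ, 0 < c ∧ ∀ θ, c ≤ S.g θ) {μ : Measure Θ}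
    [IsProbabilityMeasure μ] (hμ : Ergodic S.T μ) :
    ∀ᵐ θ ∂μ, Tendsto (fun n => S.Γn n θ) atTop (𝓝 (∫ θ, Real.log (S.g (S.Tinv θ)) ∂μ)) := by
  obtain ⟨c, hc, hcg⟩ := hg
  obtain ⟨C, hC⟩ := S.g_bdd
  have hbound : ∀ θ, |Real.log (S.g (S.Tinv θ))| ≤ |Real.log c| + |Real.log C| := fun θ =>
    abs_le.2 ⟨by linarith [neg_abs_le (Real.log c), abs_nonneg (Real.log C),
        Real.log_le_log hc (hcg (S.Tinv θ))],
      by linarith [le_abs_self (Real.log C), abs_nonneg (Real.log c),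
        Real.log_le_log (S.g_pos (S.Tinv θ)) (hC (S.Tinv θ))]⟩
  have herg : Ergodic S.Tinv μ := Ergodic.symm (e := S.toMeasurableEquiv) hμ
  filter_upwards [herg.ae_tendsto_birkhoffAverage (f := fun θ => Real.log (S.g (S.Tinv θ)))
    (Real.measurable_log.comp (S.g_meas.comp S.Tinv_meas)) hbound] with θ hθ
  refine hθ.congr fun n => ?_
  rw [Γn_eq_logSum_div, birkhoffAverage, logSum, smul_eq_mul, div_eq_inv_mul]

end Setting

theorem stmt14_general {Θ : Type*} [MeasurableSpace Θ] (S : Setting Θ)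
    (hg : ∃ c : ℝ, 0 < c ∧ ∀ θ, c ≤ S.g θ)
    (M : ℝ → ℝ) (hM : ∀ t, 0 < M t)
    (t : ℝ) (μ : Measure Θ) [IsProbabilityMeasure μ] (hμ : Ergodic S.T μ) :
    μ (S.Sset M t \ S.S't t) = 0 ∧ μ (S.R't t \ S.Sset M t) = 0 := by
  have hnull := ae_iff.1 (S.ae_tendsto_Γn hg hμ)
  constructor
  · refine measure_mono_null ?_ hnull
    rintro θ ⟨hθS, hθS'⟩ hconv
    have hγ : _ = t := (Setting.tc_eq_of_tendsto hM hconv).symm.trans hθS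
    exact hθS' (hγ ▸ hconv)
  · refine measure_mono_null ?_ hnull
    rintro θ ⟨⟨nk, hmono, -, hsub⟩, hθS⟩ hconv
    exact hθS ((Setting.tc_eq_of_tendsto hM hconv).trans
      (tendsto_nhds_unique (hconv.comp hmono.tendsto_atTop) hsub))

/-- assuming `inf g > 0`, for an ergodic `T`-invariant probability measure
`μ`: `μ(S_t \ S_t') = 0` and `μ(R_t' \ S_t) = 0`. -/
theorem stmt14 {Θ : Type*} [MeasurableSpace Θ] (S : Setting Θ)
    (hg : ∃ c : ℝ, 0 < c ∧ ∀ θ, c ≤ S.g θ)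
    (M : ℝ → ℝ) (hM : ∀ t, 0 < M t) (hMf : ∀ t θ, S.f t θ (M t) < M t)
    (t : ℝ) (μ : Measure Θ) [IsProbabilityMeasure μ] (hμ : Ergodic S.T μ) :
    μ (S.Sset M t \ S.S't t) = 0 ∧ μ (S.R't t \ S.Sset M t) = 0 :=
  stmt14_general S hg M hM t μ hμ
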